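/- arXiv:math-ph/0606039 — 3 statements merged into one kernel-verified Lean document; each statement's English description precedes it below -/
import Mathlib

section
/- (Atkinson factorization) Let A be an associative unital Rota–Baxter algebra with Rota–Baxter operator R (satisfying R(a)R(b) = R(R(a)b + aR(b) − ab)), equipped with a complete decreasing filtration A ⊇ A¹ ⊇ A² ⊇ ⋯ with AᵘAᵛ ⊆ A^{u+v}, and suppose R preserves the filtration. Let a ∈ A¹ and let X, Y ∈ A satisfy X = 1 − R(X·a) and Y = 1 − (Id−R)(a·Y). Then X(1 + a)Y = 1, hence 1 + a = X⁻¹Y⁻¹. -/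
/-- Atkinson factorization: in a complete filtered associative unital Rota–Baxter
algebra, if `X = 1 − R(X·a)` and `Y = 1 − (Id−R)(a·Y)` for `a ∈ A¹`, then
`X(1 + a)Y = 1`, hence `1 + a = X⁻¹Y⁻¹`. -/
theorem atkinson_factorization
    (k A : Type*) [Field k] [Ring A] [Algebra k A]
    (R : A →ₗ[k] A)
    (hRB : ∀ a b : A, R a * R b = R (R a * b + a * R b - a * b))
    (F : ℕ → Submodule k A)
    (hFmono : ∀ n : ℕ, F (n + 1) ≤ F n)
    (hFzero : F 0 = ⊤)
    (hFmul : ∀ u v : ℕ, ∀ x ∈ F u, ∀ y ∈ F v, x * y ∈ F (u + v))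
    (hFR : ∀ n : ℕ, ∀ x ∈ F n, R x ∈ F n)
    (hHausdorff : ∀ x : A, (∀ n : ℕ, x ∈ F n) → x = 0)
    (a : A) (ha : a ∈ F 1)
    (X Y : A)
    (hX : X = 1 - R (X * a))
    (hY : Y = 1 - (a * Y - R (a * Y))) :
    X * (1 + a) * Y = 1 ∧
      ∀ Xi Yi : A, Xi * X = 1 → X * Xi = 1 → Yi * Y = 1 → Y * Yi = 1 →
        1 + a = Xi * Yi := by
  have hX' : R (X * a) = 1 - X := by
    nth_rewrite 2 [hX]
    abel
  have hY' : R (a * Y) = a * Y + Y - 1 := by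
    nth_rewrite 3 [hY]
    abel
  have h0 : R (X * a) * (a * Y) + X * a * R (a * Y) - X * a * (a * Y)
      = a * Y - X * a := by
    rw [hX', hY']
    noncomm_ring
  have final : (1 - X) * (a * Y + Y - 1) = (a * Y + Y - 1) - (1 - X) := by
    rw [← hX', ← hY', hRB, h0, map_sub, hX', hY']
  have key : X * (1 + a) * Y = 1 := by
    have h2 : X * (1 + a) * Y - 1
        = ((a * Y + Y - 1) - (1 - X)) - (1 - X) * (a * Y + Y - 1) := by
      noncomm_ring
    rw [final, sub_self] at h2
    exact sub_eq_zero.mp h2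
  refine ⟨key, ?_⟩
  intro Xi Yi hXiX hXXi hYiY hYYi
  calc 1 + a = 1 * (1 + a) * 1 := by noncomm_ring
    _ = (Xi * X) * (1 + a) * (Y * Yi) := by rw [hXiX, hYYi]
    _ = Xi * (X * (1 + a) * Y) * Yi := by noncomm_ring
    _ = Xi * 1 * Yi := by rw [key]
    _ = Xi * Yi := by noncomm_ring
end

section
/- Under the matrix representation Ψ_J, the antipode is represented by the inverse of the coproduct matrix: Ψ_J[S] = M⁻¹, and since M − 1 is strictly lower triangular (nilpotent for finite size), M⁻¹ = 1 + Σ_{k>0} (−1)^k (M − 1)^k. -/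
/-!
Linear independence of `x` lets one compare coefficients of the `x j` in the last tensor leg.
Applied to the counit and coassociativity axioms for `Δ (x i) = ∑ j, M i j ⊗ x j`, this shows
that `M` is a matrix corepresentation: `ε (M i j) = δ i j` and `Δ (M i j) = ∑ l, M i l ⊗ M l j`.
The two antipode axioms then say precisely `S(M) * M = 1 = M * S(M)`. Since `M - 1` is strictly
lower triangular it is nilpotent, so the truncated geometric series in `-(M - 1)` is a right
inverse of `M`, hence equal to the left inverse `S(M)`.
-/

open TensorProduct

theorem LinearIndependent.eq_zero_of_sum_tmul_eq_zero {K V W ι : Type*} [Field K]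
    [AddCommGroup V] [Module K V] [AddCommGroup W] [Module K W] [Fintype ι] {x : ι → V}
    (hx : LinearIndependent K x) {t : ι → W} (h : ∑ i, t i ⊗ₜ[K] x i = 0) (j : ι) :
    t j = 0 := by
  classical
  -- `f` extends the coordinates on `span K (range x)` to all of `V`.
  obtain ⟨f, hf⟩ := LinearMap.exists_extend hx.repr
  have hfx (i : ι) : f (x i) = Finsupp.single i 1 :=
    (LinearMap.congr_fun hf ⟨x i, Submodule.subset_span (Set.mem_range_self i)⟩).trans
      (hx.repr_eq_single i _ rfl)
  simpa [hfx, Finsupp.single_apply] using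
    congrArg (TensorProduct.rid K W ∘ (Finsupp.lapply j ∘ₗ f).lTensor W) h

section Coalgebra

variable {k C ι : Type*} [Field k] [AddCommGroup C] [Module k C] [Coalgebra k C]
  [Fintype ι] {x : ι → C} {M : Matrix ι ι C}

open Coalgebra

theorem Coalgebra.map_counit_eq_one_of_comul_eq [DecidableEq ι] (hx : LinearIndependent k x)
    (hM : ∀ i, comul (R := k) (x i) = ∑ j, M i j ⊗ₜ[k] x j) :
    M.map (counit (R := k)) = 1 := by
  ext i j
  have h := congrArg (TensorProduct.lid k C) (rTensor_counit_comul (R := k) (x i))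
  simp only [hM, map_sum, LinearMap.rTensor_tmul, TensorProduct.lid_tmul, one_smul] at h
  refine hx.eq_coords_of_eq (g := fun l => (1 : Matrix ι ι k) i l) (h.trans ?_) j
  simp [Matrix.one_apply]

theorem Coalgebra.comul_eq_sum_tmul_of_comul_eq (hx : LinearIndependent k x)
    (hM : ∀ i, comul (R := k) (x i) = ∑ j, M i j ⊗ₜ[k] x j) (i j : ι) :
    comul (R := k) (M i j) = ∑ l, M i l ⊗ₜ[k] M l j := by
  have h := coassoc_symm_apply (R := k) (x i)
  simp only [hM, map_sum, LinearMap.lTensor_tmul, LinearMap.rTensor_tmul, tmul_sum,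
    assoc_symm_tmul] at h
  rw [Finset.sum_comm, ← sub_eq_zero, ← Finset.sum_sub_distrib] at h
  simp only [← sum_tmul, ← sub_tmul] at h
  exact (sub_eq_zero.mp (hx.eq_zero_of_sum_tmul_eq_zero h j)).symm

end Coalgebra

section HopfAlgebra

variable {R A ι : Type*} [CommSemiring R] [Semiring A] [HopfAlgebra R A] [Fintype ι]
  [DecidableEq ι] {M : Matrix ι ι A}

open Coalgebra

theorem HopfAlgebra.map_antipode_mul_eq_one (hcounit : M.map (counit (R := R)) = 1)
    (hcomul : ∀ i j, comul (R := R) (M i j) = ∑ l, M i l ⊗ₜ[R] M l j) :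
    M.map (antipode R) * M = 1 := by
  ext i j
  have h := mul_antipode_rTensor_comul_apply (R := R) (M i j)
  simp only [hcomul, map_sum, LinearMap.rTensor_tmul, LinearMap.mul'_apply] at h
  simp only [Matrix.mul_apply, Matrix.map_apply]
  rw [h, ← Matrix.map_apply (M := M) (f := counit), hcounit, Matrix.one_apply, Matrix.one_apply,
    apply_ite (algebraMap R A), map_one, map_zero]

theorem HopfAlgebra.mul_map_antipode_eq_one (hcounit : M.map (counit (R := R)) = 1)
    (hcomul : ∀ i j, comul (R := R) (M i j) = ∑ l, M i l ⊗ₜ[R] M l j) :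
    M * M.map (antipode R) = 1 := by
  ext i j
  have h := mul_antipode_lTensor_comul_apply (R := R) (M i j)
  simp only [hcomul, map_sum, LinearMap.lTensor_tmul, LinearMap.mul'_apply] at h
  simp only [Matrix.mul_apply, Matrix.map_apply]
  rw [h, ← Matrix.map_apply (M := M) (f := counit), hcounit, Matrix.one_apply, Matrix.one_apply,
    apply_ite (algebraMap R A), map_one, map_zero]

end HopfAlgebra

theorem Matrix.pow_apply_eq_zero_of_lt_add {R : Type*} [Semiring R] {m : ℕ}
    {N : Matrix (Fin m) (Fin m) R} (hN : ∀ i j, i ≤ j → N i j = 0) (l : ℕ) {i j : Fin m}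
    (hij : (i : ℕ) < j + l) : (N ^ l) i j = 0 := by
  induction l generalizing j with
  | zero => exact Matrix.one_apply_ne (by omega)
  | succ l ih =>
    rw [pow_succ, Matrix.mul_apply]
    refine Finset.sum_eq_zero fun c _ => ?_
    rcases le_or_gt c j with hcj | hjc
    · rw [hN c j hcj, mul_zero]
    · rw [ih (by omega), zero_mul]

theorem Matrix.pow_card_eq_zero_of_strictLowerTriangular {R : Type*} [Semiring R] {m : ℕ}
    {N : Matrix (Fin m) (Fin m) R} (hN : ∀ i j, i ≤ j → N i j = 0) : N ^ m = 0 := by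
  ext i j
  exact pow_apply_eq_zero_of_lt_add hN m (by omega)

theorem eq_one_add_sum_neg_pow_of_mul_one_add_eq_one {A : Type*} [Ring A] {a N : A} {n : ℕ}
    (hN : N ^ n = 0) (ha : a * (1 + N) = 1) :
    a = 1 + ∑ l ∈ Finset.Ico 1 n, (-N) ^ l := by
  rcases n.eq_zero_or_pos with rfl | hn
  · have : Subsingleton A := subsingleton_of_zero_eq_one (by rw [← hN, pow_zero])
    exact Subsingleton.elim _ _
  have hgeom : (1 + N) * ∑ l ∈ Finset.range n, (-N) ^ l = 1 := by
    rw [← sub_neg_eq_add, mul_neg_geom_sum, neg_pow, hN, mul_zero, sub_zero]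
  rw [left_inv_eq_right_inv ha hgeom, Finset.range_eq_Ico, Finset.sum_eq_sum_Ico_succ_bot hn,
    pow_zero]

theorem antipode_matrix_is_inverse_of_coproduct_matrix_general
    (k H : Type*) [Field k] [CommRing H] [HopfAlgebra k H]
    (m : ℕ) (x : Fin m → H)
    (hind : LinearIndependent k x)
    (M : Matrix (Fin m) (Fin m) H)
    (hM : ∀ i : Fin m, Coalgebra.comul (R := k) (x i) = ∑ j, M i j ⊗ₜ[k] x j)
    (hdiag : ∀ i : Fin m, M i i = 1)
    (htri : ∀ i j : Fin m, i < j → M i j = 0) :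
    (Matrix.of fun i j => HopfAlgebra.antipode (R := k) (M i j)) * M = 1 ∧
    M * (Matrix.of fun i j => HopfAlgebra.antipode (R := k) (M i j)) = 1 ∧
    (Matrix.of fun i j => HopfAlgebra.antipode (R := k) (M i j))
      = 1 + ∑ l ∈ Finset.Ico 1 m, ((-1 : H) ^ l) • (M - 1) ^ l := by
  have hcounit := Coalgebra.map_counit_eq_one_of_comul_eq hind hM
  have hcomul := Coalgebra.comul_eq_sum_tmul_of_comul_eq hind hM
  have hleft := HopfAlgebra.map_antipode_mul_eq_one hcounit hcomul
  refine ⟨hleft, HopfAlgebra.mul_map_antipode_eq_one hcounit hcomul, ?_⟩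
  have hstrict : ∀ i j, i ≤ j → (M - 1) i j = 0 := by
    intro i j hij
    rcases hij.eq_or_lt with rfl | hlt
    · simp [hdiag]
    · simp [htri i j hlt, Matrix.one_apply_ne hlt.ne]
  have hinv := eq_one_add_sum_neg_pow_of_mul_one_add_eq_one
    (Matrix.pow_card_eq_zero_of_strictLowerTriangular hstrict) (by rwa [add_sub_cancel])
  simp only [← smul_pow, neg_one_smul]
  exact hinv

/-- Under the matrix representation, the antipode is represented by the inverse of
the (unipotent lower triangular) coproduct matrix: `Ψ_J[S] · M = M · Ψ_J[S] = 1`,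
and `Ψ_J[S] = M⁻¹ = 1 + Σ_{l>0} (−1)^l (M − 1)^l` (a finite sum by nilpotency). -/
theorem antipode_matrix_is_inverse_of_coproduct_matrix
    (k H : Type*) [Field k] [CharZero k] [CommRing H] [HopfAlgebra k H]
    (m : ℕ) (x : Fin m → H)
    (hind : LinearIndependent k x)
    (M : Matrix (Fin m) (Fin m) H)
    (hM : ∀ i : Fin m, Coalgebra.comul (R := k) (x i) = ∑ j, M i j ⊗ₜ[k] x j)
    (hdiag : ∀ i : Fin m, M i i = 1)
    (htri : ∀ i j : Fin m, i < j → M i j = 0) :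
    (Matrix.of fun i j => HopfAlgebra.antipode (R := k) (M i j)) * M = 1 ∧
    M * (Matrix.of fun i j => HopfAlgebra.antipode (R := k) (M i j)) = 1 ∧
    (Matrix.of fun i j => HopfAlgebra.antipode (R := k) (M i j))
      = 1 + ∑ l ∈ Finset.Ico 1 m, ((-1 : H) ^ l) • (M - 1) ^ l :=
  antipode_matrix_is_inverse_of_coproduct_matrix_general k H m x hind M hM hdiag htri
end

section
/- Let φ̂ be a unipotent lower triangular n×n matrix (φ̂ − 1 strictly lower triangular) with entries in A = A₋ ⊕ A₊, and let R be the entrywise projection onto A₋. Then the unique solutions φ̂₋ = 1 − R(φ̂₋ (φ̂ − 1)) and φ̂₊⁻¹ = 1 − (Id−R)((φ̂ − 1) φ̂₊⁻¹) yield the factorization φ̂ = φ̂₋⁻¹ φ̂₊, with φ̂₋ − 1 having entries in A₋ and φ̂₊ − 1 having entries in A₊. -/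
/-- Entrywise application of a linear map to a matrix. -/
def entrywiseMap {k A : Type*} [CommSemiring k] [CommRing A] [Algebra k A] {n : ℕ}
    (π : A →ₗ[k] A) (T : Matrix (Fin n) (Fin n) A) : Matrix (Fin n) (Fin n) A :=
  Matrix.of fun i j => π (T i j)

/-- Uniqueness induction for the minus part. -/
lemma birkhoff_aux_left {k A : Type*} [CommSemiring k] [CommRing A] [Algebra k A] {n : ℕ}
    (π : A →ₗ[k] A) (N D : Matrix (Fin n) (Fin n) A)
    (hN : ∀ i j : Fin n, i ≤ j → N i j = 0)
    (hD : ∀ i j : Fin n, D i j = -π ((D * N) i j)) : D = 0 := by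
  have key : ∀ m : ℕ, ∀ j : Fin n, n - j.val = m → ∀ i : Fin n, D i j = 0 := by
    intro m
    induction m using Nat.strong_induction_on with
    | _ m ih =>
      intro j hj i
      have hsum : (D * N) i j = 0 := by
        rw [Matrix.mul_apply]
        apply Finset.sum_eq_zero
        intro l _
        rcases le_or_gt l j with h | h
        · rw [hN l j h, mul_zero]
        · have hl : D i l = 0 := by
            refine ih (n - l.val) ?_ l rfl i
            omega
          rw [hl, zero_mul]
      rw [hD i j, hsum, map_zero, neg_zero]
  ext i j
  simpa using key (n - j.val) j rfl i

/-- Uniqueness induction for the plus part. -/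
lemma birkhoff_aux_right {k A : Type*} [CommSemiring k] [CommRing A] [Algebra k A] {n : ℕ}
    (π : A →ₗ[k] A) (N D : Matrix (Fin n) (Fin n) A)
    (hN : ∀ i j : Fin n, i ≤ j → N i j = 0)
    (hD : ∀ i j : Fin n, D i j = -((N * D) i j - π ((N * D) i j))) : D = 0 := by
  have key : ∀ m : ℕ, ∀ i : Fin n, i.val = m → ∀ j : Fin n, D i j = 0 := by
    intro m
    induction m using Nat.strong_induction_on with
    | _ m ih =>
      intro i hi j
      have hsum : (N * D) i j = 0 := by
        rw [Matrix.mul_apply]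
        apply Finset.sum_eq_zero
        intro l _
        rcases le_or_gt i l with h | h
        · rw [hN i l h, zero_mul]
        · have hl : D l j = 0 := ih l.val (by omega) l rfl j
          rw [hl, mul_zero]
      rw [hD i j, hsum, map_zero, sub_zero, neg_zero]
  ext i j
  simpa using key i.val i rfl j

/-- Matrix Birkhoff decomposition: for a unipotent lower triangular matrix `φ̂` over
`A = A₋ ⊕ A₊` with entrywise Rota–Baxter projection `R` onto `A₋`, the unique
solutions of `φ̂₋ = 1 − R(φ̂₋(φ̂ − 1))` and `φ̂₊⁻¹ = 1 − (Id−R)((φ̂ − 1)φ̂₊⁻¹)` give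
the factorization `φ̂ = φ̂₋⁻¹ φ̂₊`, with `φ̂₋ − 1` having entries in `A₋` and
`φ̂₊ − 1` having entries in `A₊`. -/
theorem matrix_birkhoff_decomposition
    (k A : Type*) [Field k] [CommRing A] [Algebra k A] (n : ℕ)
    (Am Ap : Submodule k A)
    (hAmMul : ∀ a ∈ Am, ∀ b ∈ Am, a * b ∈ Am)
    (hApMul : ∀ a ∈ Ap, ∀ b ∈ Ap, a * b ∈ Ap)
    (hone : (1 : A) ∈ Ap)
    (hinter : ∀ a : A, a ∈ Am → a ∈ Ap → a = 0)
    (π : A →ₗ[k] A)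
    (hπm : ∀ a : A, π a ∈ Am)
    (hπp : ∀ a : A, a - π a ∈ Ap)
    (φ : Matrix (Fin n) (Fin n) A)
    (hφdiag : ∀ i : Fin n, φ i i = 1)
    (hφtri : ∀ i j : Fin n, i < j → φ i j = 0)
    (φm ψ : Matrix (Fin n) (Fin n) A)
    (hφm : φm = 1 - entrywiseMap π (φm * (φ - 1)))
    (hψ : ψ = 1 - ((φ - 1) * ψ - entrywiseMap π ((φ - 1) * ψ))) :
    φm * φ * ψ = 1 ∧
    (∀ i j : Fin n, (φm - 1) i j ∈ Am) ∧
    (∀ i j : Fin n, (φm * φ - 1) i j ∈ Ap) ∧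
    (∀ φm' : Matrix (Fin n) (Fin n) A,
      φm' = 1 - entrywiseMap π (φm' * (φ - 1)) → φm' = φm) ∧
    (∀ ψ' : Matrix (Fin n) (Fin n) A,
      ψ' = 1 - ((φ - 1) * ψ' - entrywiseMap π ((φ - 1) * ψ')) → ψ' = ψ) := by
  set N : Matrix (Fin n) (Fin n) A := φ - 1 with hNdef
  have hφN : φ = 1 + N := by rw [hNdef]; abel
  -- N is strictly lower triangular
  have hNtri : ∀ i j : Fin n, i ≤ j → N i j = 0 := by
    intro i j h
    rcases eq_or_lt_of_le h with h | h
    · subst h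
      simp [hNdef, Matrix.sub_apply, Matrix.one_apply, hφdiag i]
    · simp [hNdef, Matrix.sub_apply, Matrix.one_apply_ne (ne_of_lt h), hφtri i j h]
  -- basic rearrangements
  have hφm1 : φm - 1 = -entrywiseMap π (φm * N) := by
    have h0 : φm - 1 = (1 - entrywiseMap π (φm * N)) - 1 := by rw [← hφm]
    rw [h0]; abel
  have hψ1 : ψ - 1 = -((N * ψ) - entrywiseMap π (N * ψ)) := by
    have h0 : ψ - 1 = (1 - (N * ψ - entrywiseMap π (N * ψ))) - 1 := by rw [← hψ]
    rw [h0]; abel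
  have hφψ : φ * ψ = 1 + entrywiseMap π (N * ψ) :=
    calc φ * ψ = (1 + N) * ψ := by rw [hφN]
    _ = ψ + N * ψ := by noncomm_ring
    _ = (1 - (N * ψ - entrywiseMap π (N * ψ))) + N * ψ := by rw [← hψ]
    _ = 1 + entrywiseMap π (N * ψ) := by abel
  have hφmφ : φm * φ = 1 + (φm * N - entrywiseMap π (φm * N)) :=
    calc φm * φ = φm * (1 + N) := by rw [hφN]
    _ = φm + φm * N := by noncomm_ring
    _ = (1 - entrywiseMap π (φm * N)) + φm * N := by rw [← hφm]
    _ = 1 + (φm * N - entrywiseMap π (φm * N)) := by abel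
  -- memberships
  have hmem_m : ∀ i j : Fin n, (φm - 1) i j ∈ Am := by
    intro i j
    rw [hφm1]
    simpa [entrywiseMap, Matrix.neg_apply] using Am.neg_mem (hπm ((φm * N) i j))
  have hmem_p : ∀ i j : Fin n, (φm * φ - 1) i j ∈ Ap := by
    intro i j
    have h0 : φm * φ - 1 = φm * N - entrywiseMap π (φm * N) := by rw [hφmφ]; abel
    rw [h0]
    simpa [entrywiseMap, Matrix.sub_apply] using hπp ((φm * N) i j)
  have hmem_ψ : ∀ i j : Fin n, (ψ - 1) i j ∈ Ap := by
    intro i j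
    rw [hψ1]
    simpa [entrywiseMap, Matrix.neg_apply, Matrix.sub_apply] using
      Ap.neg_mem (hπp ((N * ψ) i j))
  -- the product X
  set X : Matrix (Fin n) (Fin n) A := φm * φ * ψ with hXdef
  have hXm : X - 1 = (φm - 1) + entrywiseMap π (N * ψ) + (φm - 1) * entrywiseMap π (N * ψ) := by
    have h0 : X = φm * (φ * ψ) := by rw [hXdef, mul_assoc]
    rw [h0, hφψ]
    noncomm_ring
  have hXmem_m : ∀ i j : Fin n, (X - 1) i j ∈ Am := by
    intro i j
    rw [hXm]
    simp only [Matrix.add_apply, Matrix.mul_apply, entrywiseMap, Matrix.of_apply]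
    refine Am.add_mem (Am.add_mem (hmem_m i j) (hπm _)) ?_
    exact Am.sum_mem fun l _ => hAmMul _ (hmem_m i l) _ (hπm _)
  have hXp : X - 1 = (ψ - 1) + (φm * φ - 1) + (φm * φ - 1) * (ψ - 1) := by
    rw [hXdef]; noncomm_ring
  have hXmem_p : ∀ i j : Fin n, (X - 1) i j ∈ Ap := by
    intro i j
    rw [hXp]
    simp only [Matrix.add_apply, Matrix.mul_apply]
    refine Ap.add_mem (Ap.add_mem (hmem_ψ i j) (hmem_p i j)) ?_
    exact Ap.sum_mem fun l _ => hApMul _ (hmem_p i l) _ (hmem_ψ l j)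
  have hX1 : X = 1 := by
    have h0 : X - 1 = 0 := by
      ext i j
      have := hinter _ (hXmem_m i j) (hXmem_p i j)
      simpa using this
    linear_combination (norm := noncomm_ring) h0
  refine ⟨hX1, hmem_m, hmem_p, ?_, ?_⟩
  · intro φm' hφm'
    have hmapsub : entrywiseMap π (φm' * N) - entrywiseMap π (φm * N)
        = entrywiseMap π ((φm' - φm) * N) := by
      ext i j
      simp [entrywiseMap, Matrix.sub_apply, sub_mul, map_sub]
    have hDmat : φm' - φm = -entrywiseMap π ((φm' - φm) * N) :=
      calc φm' - φm
          = (1 - entrywiseMap π (φm' * N)) - (1 - entrywiseMap π (φm * N)) := by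
            rw [← hφm', ← hφm]
        _ = -(entrywiseMap π (φm' * N) - entrywiseMap π (φm * N)) := by abel
        _ = -entrywiseMap π ((φm' - φm) * N) := by rw [hmapsub]
    have hD : ∀ i j : Fin n, (φm' - φm) i j = -π (((φm' - φm) * N) i j) := by
      intro i j
      have := congrFun (congrFun hDmat i) j
      simpa [entrywiseMap, Matrix.neg_apply] using this
    exact sub_eq_zero.mp (birkhoff_aux_left π N (φm' - φm) hNtri hD)
  · intro ψ' hψ'
    have hmapsub : entrywiseMap π (N * ψ') - entrywiseMap π (N * ψ)
        = entrywiseMap π (N * (ψ' - ψ)) := by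
      ext i j
      simp [entrywiseMap, Matrix.sub_apply, mul_sub, map_sub]
    have hDmat : ψ' - ψ = -((N * (ψ' - ψ)) - entrywiseMap π (N * (ψ' - ψ))) :=
      calc ψ' - ψ
          = (1 - (N * ψ' - entrywiseMap π (N * ψ')))
            - (1 - (N * ψ - entrywiseMap π (N * ψ))) := by rw [← hψ', ← hψ]
        _ = -((N * ψ' - N * ψ)
            - (entrywiseMap π (N * ψ') - entrywiseMap π (N * ψ))) := by abel
        _ = -((N * (ψ' - ψ)) - entrywiseMap π (N * (ψ' - ψ))) := by
            rw [hmapsub, mul_sub]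
    have hD : ∀ i j : Fin n, (ψ' - ψ) i j
        = -((N * (ψ' - ψ)) i j - π ((N * (ψ' - ψ)) i j)) := by
      intro i j
      have := congrFun (congrFun hDmat i) j
      simpa [entrywiseMap, Matrix.neg_apply, Matrix.sub_apply] using this
    exact sub_eq_zero.mp (birkhoff_aux_right π N (ψ' - ψ) hNtri hD)
end
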